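/- arXiv:2211.13628 — 3 statements merged into one kernel-verified Lean document; each statement's English description precedes it below -/
import Mathlib

section
/- For Bernoulli distributions with parameters p̄ and q̄ in [0,1], if α ≤ q̄ ≤ 1−α for some α > 0, then the KL divergence satisfies KL(p̄‖q̄) ≤ (2/α)·(p̄−q̄)². -/
/-- For Bernoulli distributions with parameters `p, q ∈ [0,1]`, if `α ≤ q ≤ 1 − α`
for some `α > 0`, then `KL(p‖q) ≤ (2/α) (p − q)²`. -/
theorem bernoulli_kl_upper_bound (p q α : ℝ)
    (hp : p ∈ Set.Icc (0 : ℝ) 1) (hq : q ∈ Set.Icc (0 : ℝ) 1)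
    (hα : 0 < α) (hq1 : α ≤ q) (hq2 : q ≤ 1 - α) :
    p * Real.log (p / q) + (1 - p) * Real.log ((1 - p) / (1 - q))
      ≤ (2 / α) * (p - q) ^ 2 := by
  obtain ⟨hp0, hp1⟩ := hp
  have hq0 : 0 < q := lt_of_lt_of_le hα hq1
  have h1q : 0 < 1 - q := lt_of_lt_of_le hα (by linarith)
  have h1 : p * Real.log (p / q) ≤ p * (p / q - 1) := by
    rcases eq_or_lt_of_le hp0 with h | h
    · simp [← h]
    · exact mul_le_mul_of_nonneg_left
        (Real.log_le_sub_one_of_pos (div_pos h hq0)) hp0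
  have h2 : (1 - p) * Real.log ((1 - p) / (1 - q)) ≤ (1 - p) * ((1 - p) / (1 - q) - 1) := by
    rcases eq_or_lt_of_le hp1 with h | h
    · simp [h]
    · exact mul_le_mul_of_nonneg_left
        (Real.log_le_sub_one_of_pos (div_pos (by linarith) h1q)) (by linarith)
  have key : p * (p / q - 1) + (1 - p) * ((1 - p) / (1 - q) - 1)
      = (p - q) ^ 2 / (q * (1 - q)) := by
    field_simp
    ring
  have hqq : α ≤ 2 * (q * (1 - q)) := by nlinarith [mul_nonneg (sub_nonneg.2 hq1) (by linarith : (0:ℝ) ≤ 1 - α - q)]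
  have hfin : (p - q) ^ 2 / (q * (1 - q)) ≤ (2 / α) * (p - q) ^ 2 := by
    have h : 1 / (q * (1 - q)) ≤ 2 / α := by
      rw [div_le_div_iff₀ (by positivity) hα]; linarith
    calc (p - q) ^ 2 / (q * (1 - q)) = (p - q) ^ 2 * (1 / (q * (1 - q))) := by ring
      _ ≤ (p - q) ^ 2 * (2 / α) := mul_le_mul_of_nonneg_left h (sq_nonneg _)
      _ = (2 / α) * (p - q) ^ 2 := by ring
  linarith [key ▸ (add_le_add h1 h2)]
end

section
/- Let A be an irreducible aperiodic n×n stochastic matrix with stationary distribution π, and define V_π(x) = (πᵀx)(1−πᵀx). Then for the voter model, for every x ∈ {0,1}ⁿ with x ∉ {0⃗,1⃗}, E[V_π(X_{t+1}) − V_π(X_t) | X_t = x] = − Σ_{u=1}^n π_u² V_{a_u}(x), where V_{a_u}(x) = (a_uᵀx)(1 − a_uᵀx). -/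
open scoped BigOperators Classical
open Finset

noncomputable section

/-- Real-valued 0/1 vector associated with a Boolean state. -/
def val {n : ℕ} (x : Fin n → Bool) : Fin n → ℝ := fun u => if x u then 1 else 0

/-- Dot product of two vectors. -/
def dotp {n : ℕ} (a x : Fin n → ℝ) : ℝ := ∑ v, a v * x v

/-- A state is a consensus state if all nodes are in the same state. -/
def IsCons {n : ℕ} (x : Fin n → Bool) : Prop := (∀ u, x u = true) ∨ (∀ u, x u = false)

/-- A matrix is stochastic: nonnegative entries, rows summing to one. -/
def IsStochastic {n : ℕ} (A : Matrix (Fin n) (Fin n) ℝ) : Prop :=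
  (∀ u v, 0 ≤ A u v) ∧ ∀ u, ∑ v, A u v = 1

/-- Irreducible and aperiodic (primitivity for finite stochastic matrices). -/
def IsIrreducibleAperiodic {n : ℕ} (A : Matrix (Fin n) (Fin n) ℝ) : Prop :=
  ∃ N : ℕ, ∀ k ≥ N, ∀ u v, 0 < (A ^ k) u v

/-- `π` is the (positive) stationary distribution of `A`: `πᵀ = πᵀ A`. -/
def IsStationaryDist {n : ℕ} (A : Matrix (Fin n) (Fin n) ℝ) (π : Fin n → ℝ) : Prop :=
  (∀ v, 0 < π v) ∧ (∑ v, π v = 1) ∧ ∀ v, ∑ u, π u * A u v = π v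

/-- One-step transition probability of the voter model: conditionally on `x`, the
coordinates of the next state are independent Bernoulli(`aᵤᵀ x`). -/
def voterKernel {n : ℕ} (A : Matrix (Fin n) (Fin n) ℝ) (x y : Fin n → Bool) : ℝ :=
  ∏ u, (if y u then dotp (A u) (val x) else 1 - dotp (A u) (val x))

/-- The Lyapunov function `V_π(x) = (πᵀx)(1 − πᵀx)`. -/
def Vpi {n : ℕ} (π : Fin n → ℝ) (x : Fin n → Bool) : ℝ :=
  dotp π (val x) * (1 - dotp π (val x))

/-- The quantity `Φ_A`: minimum over non-consensus states of
`Σᵤ πᵤ² (aᵤᵀx)(1−aᵤᵀx) / ((πᵀx)(1−πᵀx))`. -/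
def PhiA {n : ℕ} (A : Matrix (Fin n) (Fin n) ℝ) (π : Fin n → ℝ) : ℝ :=
  ⨅ x : {x : Fin n → Bool // ¬ IsCons x},
    (∑ u, (π u) ^ 2 * (dotp (A u) (val x.1) * (1 - dotp (A u) (val x.1)))) / Vpi π x.1

/-!
Under the voter kernel the coordinates of the next state `Y` are independent Bernoulli(`aᵤᵀx`),
so `πᵀY` has mean `πᵀAx = πᵀx` (stationarity) and variance `∑ᵤ πᵤ² (aᵤᵀx)(1 − aᵤᵀx)`.
As `V_π(y) = πᵀy − (πᵀy)²`, this gives `E V_π(Y) = V_π(x) − ∑ᵤ πᵤ² (aᵤᵀx)(1 − aᵤᵀx)`.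
-/

def productBernoulli {n : ℕ} (p : Fin n → ℝ) (y : Fin n → Bool) : ℝ :=
  ∏ u, if y u then p u else 1 - p u

section productBernoulli

variable {n : ℕ} (p : Fin n → ℝ)

theorem sum_productBernoulli_mul_prod (g : Fin n → Bool → ℝ) :
    ∑ y, productBernoulli p y * ∏ u, g u (y u)
      = ∏ u, (p u * g u true + (1 - p u) * g u false) := by
  have hfactor : ∀ u, p u * g u true + (1 - p u) * g u false
      = ∑ b : Bool, (if b then p u else 1 - p u) * g u b := fun u => by simp
  simp only [hfactor, Fintype.prod_sum, productBernoulli, prod_mul_distrib]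

theorem sum_productBernoulli_mul_prod_val (s : Finset (Fin n)) :
    ∑ y, productBernoulli p y * ∏ u ∈ s, val y u = ∏ u ∈ s, p u := by
  have hval : ∀ y : Fin n → Bool, ∏ u ∈ s, val y u
      = ∏ u, (if u ∈ s then (if y u then 1 else 0) else 1 : ℝ) := fun y => by
    rw [← prod_ite_mem_eq]; rfl
  simp only [hval]
  rw [sum_productBernoulli_mul_prod p fun u b => if u ∈ s then (if b then 1 else 0) else 1,
    ← prod_ite_mem_eq s p]
  exact prod_congr rfl fun u _ => by by_cases hu : u ∈ s <;> simp [hu]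

theorem sum_productBernoulli : ∑ y, productBernoulli p y = 1 := by
  simpa using sum_productBernoulli_mul_prod_val p ∅

theorem sum_productBernoulli_mul_val (u : Fin n) :
    ∑ y, productBernoulli p y * val y u = p u := by
  simpa using sum_productBernoulli_mul_prod_val p {u}

theorem sum_productBernoulli_mul_val_mul_val (u v : Fin n) :
    ∑ y, productBernoulli p y * (val y u * val y v)
      = if u = v then p u else p u * p v := by
  split_ifs with huv
  · subst huv
    have hidem : ∀ y : Fin n → Bool, val y u * val y u = val y u := fun y => by
      by_cases h : y u <;> simp [_root_.val, h]
    simp only [hidem, sum_productBernoulli_mul_val]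
  · simpa [prod_pair huv] using sum_productBernoulli_mul_prod_val p {u, v}

theorem sum_productBernoulli_mul_dotp (c : Fin n → ℝ) :
    ∑ y, productBernoulli p y * dotp c (val y) = dotp c p := by
  simp only [dotp, mul_sum]
  rw [sum_comm]
  refine sum_congr rfl fun u _ => ?_
  simp only [mul_left_comm _ (c u), ← mul_sum, sum_productBernoulli_mul_val]

theorem sum_productBernoulli_mul_dotp_sq (c : Fin n → ℝ) :
    ∑ y, productBernoulli p y * dotp c (val y) ^ 2
      = dotp c p ^ 2 + ∑ u, c u ^ 2 * (p u * (1 - p u)) := by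
  have hsq : ∀ a : Fin n → ℝ, dotp c a ^ 2 = ∑ u, ∑ v, c u * c v * (a u * a v) := fun a => by
    simp only [dotp, sq, sum_mul_sum]
    exact sum_congr rfl fun u _ => sum_congr rfl fun v _ => by ring
  have hcross : ∀ u v, (if u = v then p u else p u * p v)
      = p u * p v + if u = v then p u * (1 - p u) else 0 := fun u v => by
    split_ifs with h
    · subst h; ring
    · ring
  simp only [hsq, mul_sum]
  rw [sum_comm]
  simp only [sum_comm (γ := Fin n → Bool), mul_left_comm _ (c _ * c _), ← mul_sum,
    sum_productBernoulli_mul_val_mul_val, hcross, mul_add, sum_add_distrib, mul_ite, mul_zero,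
    sum_ite_eq]
  simp only [mem_univ, if_true, sq, mul_assoc]

theorem sum_productBernoulli_mul_Vpi (c : Fin n → ℝ) :
    ∑ y, productBernoulli p y * Vpi c y
      = dotp c p * (1 - dotp c p) - ∑ u, c u ^ 2 * (p u * (1 - p u)) := by
  have hV : ∀ y, Vpi c y = dotp c (val y) - dotp c (val y) ^ 2 := fun y => by
    rw [Vpi]; ring
  simp only [hV, mul_sub, sum_sub_distrib, sum_productBernoulli_mul_dotp,
    sum_productBernoulli_mul_dotp_sq]
  ring

end productBernoulli

theorem dotp_mulVec_of_stationary {n : ℕ} {A : Matrix (Fin n) (Fin n) ℝ} {π : Fin n → ℝ}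
    (hπ : ∀ v, ∑ u, π u * A u v = π v) (z : Fin n → ℝ) :
    dotp π (A.mulVec z) = dotp π z := by
  have hvecMul : Matrix.vecMul π A = π := funext hπ
  change π ⬝ᵥ A.mulVec z = π ⬝ᵥ z
  rw [Matrix.dotProduct_mulVec, hvecMul]

theorem voter_drift_identity_general {n : ℕ} (A : Matrix (Fin n) (Fin n) ℝ) (π : Fin n → ℝ)
    (hπ : IsStationaryDist A π)
    (x : Fin n → Bool) :
    ∑ y, voterKernel A x y * (Vpi π y - Vpi π x)
      = - ∑ u, (π u) ^ 2 * (dotp (A u) (val x) * (1 - dotp (A u) (val x))) := by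
  change ∑ y, productBernoulli (A.mulVec (val x)) y * (Vpi π y - Vpi π x)
    = -∑ u, π u ^ 2 * (A.mulVec (val x) u * (1 - A.mulVec (val x) u))
  have hmean : dotp π (A.mulVec (val x)) = dotp π (val x) :=
    dotp_mulVec_of_stationary hπ.2.2 (val x)
  simp only [mul_sub, sum_sub_distrib, ← sum_mul, sum_productBernoulli, one_mul,
    sum_productBernoulli_mul_Vpi, hmean]
  rw [Vpi]
  ring

/-- Expected one-step drift of `V_π` for the voter model at a non-consensus state:
`E[V_π(X_{t+1}) − V_π(X_t) | X_t = x] = − Σᵤ πᵤ² (aᵤᵀx)(1 − aᵤᵀx)`. -/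
theorem voter_drift_identity {n : ℕ} (A : Matrix (Fin n) (Fin n) ℝ) (π : Fin n → ℝ)
    (hA : IsStochastic A) (hirr : IsIrreducibleAperiodic A) (hπ : IsStationaryDist A π)
    (x : Fin n → Bool) (hx : ¬ IsCons x) :
    ∑ y, voterKernel A x y * (Vpi π y - Vpi π x)
      = - ∑ u, (π u) ^ 2 * (dotp (A u) (val x) * (1 - dotp (A u) (val x))) :=
  voter_drift_identity_general A π hπ x
end
end

section
/- Let G = (V,E) be a connected graph without self-loops on n vertices, and let A be the lazy voter interaction matrix a_{u,v} = (1/2)·1{u=v} + (1/(2d_u))·1{(u,v)∈E}. Then 1/Φ_A ≤ 2·(d(V)/d_min)·(1/Φ(G)), where d(V) = Σ_v d_v, d_min is the minimum degree, and Φ(G) is the graph conductance. -/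
/-!
Let `S` be the set of nodes in state `true`. For the lazy walk, `aᵤᵀx` is the mass `a_u` puts on
`S` and `1 - aᵤᵀx` the mass it puts on `Sᶜ`. For `u ∈ S` the self-loop alone gives `aᵤᵀx ≥ 1/2`,
while `1 - aᵤᵀx = d_u(Sᶜ)/(2d_u)`; so `u` contributes at least
`π_u² · 1/2 · d_u(Sᶜ)/(2d_u) ≥ d_min d_u(Sᶜ)/(4d(V)²)` to the numerator of `Φ_A`, and symmetrically
for `u ∉ S`. Summing, the numerator is at least `d_min |E(S,Sᶜ)|/(2d(V)²)`, while the denominator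
`d(S)d(Sᶜ)/d(V)²` is at most `min{d(S), d(Sᶜ)}/d(V)`. Hence `Φ_A ≥ d_min/(2d(V)) · Φ(G)`, and
`Φ(G) > 0` because `G` is connected.
-/

open scoped BigOperators Classical
open Finset

noncomputable section

/-- `π` is the (positive) stationary distribution of `A`: `πᵀ = πᵀ A`. -/
def IsStationary' {n : ℕ} (A : Matrix (Fin n) (Fin n) ℝ) (π : Fin n → ℝ) : Prop :=
  (∀ v, 0 < π v) ∧ (∑ v, π v = 1) ∧ ∀ v, ∑ u, π u * A u v = π v

/-- The conductance `Φ(G)` of a graph `G`. -/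
def conductance {n : ℕ} (G : SimpleGraph (Fin n)) [DecidableRel G.Adj] : ℝ :=
  ⨅ S : {S : Finset (Fin n) // S.Nonempty ∧ S ≠ Finset.univ},
    (∑ u ∈ S.1, ∑ v ∈ S.1ᶜ, if G.Adj u v then (1 : ℝ) else 0) /
      min (∑ v ∈ S.1, (G.degree v : ℝ)) (∑ v ∈ S.1ᶜ, (G.degree v : ℝ))

namespace SimpleGraph

variable {V : Type*} (G : SimpleGraph V) [DecidableRel G.Adj]

def degreeIn (u : V) (T : Finset V) : ℝ := ∑ v ∈ T, if G.Adj u v then 1 else 0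

def cutSize [Fintype V] [DecidableEq V] (S : Finset V) : ℝ := ∑ u ∈ S, G.degreeIn u Sᶜ

def vol [Fintype V] (S : Finset V) : ℝ := ∑ v ∈ S, (G.degree v : ℝ)

def lazyWalk [Fintype V] [DecidableEq V] : Matrix V V ℝ := fun u v =>
  (if u = v then 1 / 2 else 0) + (if G.Adj u v then 1 / (2 * (G.degree u : ℝ)) else 0)

variable {G}

lemma degreeIn_nonneg (u : V) (T : Finset V) : 0 ≤ G.degreeIn u T :=
  sum_nonneg fun _ _ => by split_ifs <;> norm_num

variable [Fintype V]

lemma degreeIn_univ (u : V) : G.degreeIn u univ = G.degree u := by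
  simp [degreeIn, ← card_neighborFinset_eq_degree, neighborFinset_eq_filter]

lemma vol_pos (hdeg : ∀ v, 0 < G.degree v) {S : Finset V} (hS : S.Nonempty) : 0 < G.vol S :=
  sum_pos (fun v _ => Nat.cast_pos.2 (hdeg v)) hS

variable [DecidableEq V]

lemma sum_degreeIn_compl (S : Finset V) : ∑ u ∈ Sᶜ, G.degreeIn u S = G.cutSize S := by
  simp only [cutSize, degreeIn]
  rw [sum_comm]
  simp only [adj_comm]

lemma cutSize_nonneg (S : Finset V) : 0 ≤ G.cutSize S :=
  sum_nonneg fun u _ => degreeIn_nonneg u Sᶜ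

lemma Connected.cutSize_pos (hG : G.Connected) {S : Finset V} (hS : S.Nonempty)
    (hSc : Sᶜ.Nonempty) : 0 < G.cutSize S := by
  obtain ⟨u, hu⟩ := hS
  obtain ⟨w, hw⟩ := hSc
  obtain ⟨p⟩ := hG.preconnected u w
  obtain ⟨⟨⟨a, b⟩, hab⟩, -, ha, hb⟩ :=
    p.exists_boundary_dart (S : Set V) (by simpa using hu) (by simpa using mem_compl.1 hw)
  have hb' : b ∈ Sᶜ := by simpa using hb
  calc (0 : ℝ) < if G.Adj a b then 1 else 0 := by simp [hab]
    _ ≤ G.degreeIn a Sᶜ := single_le_sum (f := fun v => if G.Adj a v then (1 : ℝ) else 0)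
          (fun _ _ => by split_ifs <;> norm_num) hb'
    _ ≤ G.cutSize S := single_le_sum (fun v _ => degreeIn_nonneg v Sᶜ) (by simpa using ha)

lemma lazyWalk_nonneg (u v : V) : 0 ≤ G.lazyWalk u v := by
  unfold lazyWalk
  positivity

lemma sum_lazyWalk_of_notMem {u : V} {T : Finset V} (hu : u ∉ T) :
    ∑ v ∈ T, G.lazyWalk u v = G.degreeIn u T / (2 * G.degree u) := by
  rw [degreeIn, sum_div]
  refine sum_congr rfl fun v hv => ?_
  have huv : u ≠ v := (ne_of_mem_of_not_mem hv hu).symm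
  by_cases h : G.Adj u v <;> simp [lazyWalk, huv, h]

lemma half_le_sum_lazyWalk_of_mem {u : V} {T : Finset V} (hu : u ∈ T) :
    1 / 2 ≤ ∑ v ∈ T, G.lazyWalk u v :=
  calc 1 / 2 = G.lazyWalk u u := by simp [lazyWalk]
    _ ≤ ∑ v ∈ T, G.lazyWalk u v := single_le_sum (fun v _ => lazyWalk_nonneg u v) hu

lemma sum_lazyWalk {u : V} (hu : 0 < G.degree u) : ∑ v, G.lazyWalk u v = 1 := by
  have hdeg : G.degreeIn u (univ.erase u) = G.degree u := by
    rw [degreeIn, sum_erase _ (by simp), ← degreeIn, degreeIn_univ]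
  rw [← add_sum_erase _ _ (mem_univ u), sum_lazyWalk_of_notMem (notMem_erase u univ), hdeg]
  have hd : (G.degree u : ℝ) ≠ 0 := by positivity
  simp [lazyWalk]
  field_simp
  norm_num

lemma sum_compl_lazyWalk {u : V} (hu : 0 < G.degree u) (T : Finset V) :
    ∑ v ∈ Tᶜ, G.lazyWalk u v = 1 - ∑ v ∈ T, G.lazyWalk u v := by
  rw [← sum_lazyWalk hu, ← sum_add_sum_compl T, add_sub_cancel_left]

lemma mul_degreeIn_compl_le {u : V} {T : Finset V} (hu : u ∈ T) (hdeg : 0 < G.degree u)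
    {m : ℝ} (hm : m ≤ G.degree u) (D : ℝ) :
    m * G.degreeIn u Tᶜ / (4 * D ^ 2) ≤
      (G.degree u / D) ^ 2 * ((∑ v ∈ T, G.lazyWalk u v) * ∑ v ∈ Tᶜ, G.lazyWalk u v) := by
  have hd : (G.degree u : ℝ) ≠ 0 := by positivity
  have hk := degreeIn_nonneg (G := G) u Tᶜ
  rw [sum_lazyWalk_of_notMem (notMem_compl.2 hu)]
  calc m * G.degreeIn u Tᶜ / (4 * D ^ 2) ≤ G.degree u * G.degreeIn u Tᶜ / (4 * D ^ 2) := by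
        gcongr
    _ = (G.degree u / D) ^ 2 * (1 / 2 * (G.degreeIn u Tᶜ / (2 * G.degree u))) := by
        field_simp
        ring
    _ ≤ _ := by
        gcongr
        exact half_le_sum_lazyWalk_of_mem hu

lemma cutSize_le_sum_lazyWalk (hdeg : ∀ v, 0 < G.degree v) {m : ℝ} (hm : ∀ v, m ≤ G.degree v)
    (D : ℝ) (S : Finset V) :
    m * G.cutSize S / (2 * D ^ 2) ≤
      ∑ u, (G.degree u / D) ^ 2 * ((∑ v ∈ S, G.lazyWalk u v) * ∑ v ∈ Sᶜ, G.lazyWalk u v) := by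
  rw [← sum_add_sum_compl S]
  calc m * G.cutSize S / (2 * D ^ 2)
      = ∑ u ∈ S, m * G.degreeIn u Sᶜ / (4 * D ^ 2) +
          ∑ u ∈ Sᶜ, m * G.degreeIn u S / (4 * D ^ 2) := by
        rw [← sum_div, ← sum_div, ← mul_sum, ← mul_sum, sum_degreeIn_compl, cutSize]
        ring
    _ ≤ _ := by
        refine add_le_add (sum_le_sum fun u hu => mul_degreeIn_compl_le hu (hdeg u) (hm u) D)
          (sum_le_sum fun u hu => ?_)
        have h := mul_degreeIn_compl_le hu (hdeg u) (hm u) D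
        rwa [compl_compl, mul_comm (∑ v ∈ Sᶜ, _)] at h

end SimpleGraph

open SimpleGraph

def trueSet {n : ℕ} (x : Fin n → Bool) : Finset (Fin n) := univ.filter fun v => x v = true

lemma dotp_val {n : ℕ} (a : Fin n → ℝ) (x : Fin n → Bool) :
    dotp a (val x) = ∑ v ∈ trueSet x, a v := by
  simp [dotp, _root_.val, trueSet, sum_filter]

lemma not_isCons_iff {n : ℕ} {x : Fin n → Bool} :
    ¬ IsCons x ↔ (trueSet x).Nonempty ∧ (trueSet x)ᶜ.Nonempty := by
  simp [IsCons, trueSet, Finset.Nonempty, not_or, not_forall, and_comm]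

lemma Vpi_eq_of_sum_eq_one {n : ℕ} {π : Fin n → ℝ} (hπ : ∑ v, π v = 1) (x : Fin n → Bool) :
    Vpi π x = (∑ v ∈ trueSet x, π v) * ∑ v ∈ (trueSet x)ᶜ, π v := by
  rw [Vpi, dotp_val, ← hπ, ← sum_add_sum_compl (trueSet x), add_sub_cancel_left]

lemma conductance_le_cutSize_div {n : ℕ} (G : SimpleGraph (Fin n)) [DecidableRel G.Adj]
    {S : Finset (Fin n)} (hS : S.Nonempty) (hSc : Sᶜ.Nonempty) :
    conductance G ≤ G.cutSize S / min (G.vol S) (G.vol Sᶜ) := by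
  have hS' : S ≠ univ := by rwa [ne_eq, ← compl_eq_empty_iff, ← not_nonempty_iff_eq_empty, not_not]
  exact ciInf_le (Set.finite_range _).bddBelow
    (⟨S, hS, hS'⟩ : {S : Finset (Fin n) // S.Nonempty ∧ S ≠ univ})

lemma SimpleGraph.Connected.conductance_pos {n : ℕ} [Nontrivial (Fin n)]
    {G : SimpleGraph (Fin n)} [DecidableRel G.Adj] (hG : G.Connected) : 0 < conductance G := by
  obtain ⟨a, b, hab⟩ := exists_pair_ne (Fin n)
  have : Nonempty {S : Finset (Fin n) // S.Nonempty ∧ S ≠ univ} :=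
    ⟨⟨{a}, singleton_nonempty a, fun h => hab (mem_singleton.1 (h ▸ mem_univ b)).symm⟩⟩
  obtain ⟨⟨S, hS, hS'⟩, hmin⟩ := exists_eq_ciInf_of_finite
    (f := fun S : {S : Finset (Fin n) // S.Nonempty ∧ S ≠ univ} =>
      G.cutSize S.1 / min (G.vol S.1) (G.vol S.1ᶜ))
  have hSc : Sᶜ.Nonempty := by rwa [nonempty_iff_ne_empty, ne_eq, compl_eq_empty_iff]
  have hdeg (v : Fin n) : 0 < G.degree v := hG.preconnected.degree_pos_of_nontrivial v
  exact (div_pos (hG.cutSize_pos hS hSc) (lt_min (vol_pos hdeg hS) (vol_pos hdeg hSc))).trans_eq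
    hmin

lemma mul_conductance_le_lazyWalk_ratio {n : ℕ} {G : SimpleGraph (Fin n)} [DecidableRel G.Adj]
    (hdeg : ∀ v, 0 < G.degree v) {m : ℝ} (hm0 : 0 ≤ m) (hm : ∀ v, m ≤ G.degree v)
    {x : Fin n → Bool} (hx : ¬ IsCons x) :
    m / (2 * G.vol univ) * conductance G ≤
      (∑ u, (G.degree u / G.vol univ) ^ 2 *
        (dotp (G.lazyWalk u) (val x) * (1 - dotp (G.lazyWalk u) (val x)))) /
        Vpi (fun v => G.degree v / G.vol univ) x := by
  obtain ⟨hS, hSc⟩ := not_isCons_iff.1 hx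
  set S := trueSet x
  set D := G.vol univ
  set N := ∑ u, (G.degree u / D) ^ 2 *
    (dotp (G.lazyWalk u) (val x) * (1 - dotp (G.lazyWalk u) (val x)))
  have hD : 0 < D := vol_pos hdeg (hS.mono (subset_univ S))
  have hN : m * G.cutSize S / (2 * D ^ 2) ≤ N := by
    simpa only [N, dotp_val, ← sum_compl_lazyWalk (hdeg _)] using
      cutSize_le_sum_lazyWalk hdeg hm D S
  have hN0 : 0 ≤ N := le_trans (by have := cutSize_nonneg (G := G) S; positivity) hN
  have hV : Vpi (fun v => G.degree v / D) x = G.vol S * G.vol Sᶜ / D ^ 2 := by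
    rw [Vpi_eq_of_sum_eq_one (by rw [← sum_div]; exact div_self hD.ne'), ← sum_div, ← sum_div]
    change G.vol S / D * (G.vol Sᶜ / D) = _
    ring
  have hvS := vol_pos hdeg hS
  have hvSc := vol_pos hdeg hSc
  have hmin : G.vol S * G.vol Sᶜ ≤ min (G.vol S) (G.vol Sᶜ) * D := by
    have hsum : G.vol S + G.vol Sᶜ = D := sum_add_sum_compl S _
    rcases le_total (G.vol S) (G.vol Sᶜ) with h | h
    · rw [min_eq_left h]; nlinarith
    · rw [min_eq_right h]; nlinarith
  have hminpos : 0 < min (G.vol S) (G.vol Sᶜ) := lt_min hvS hvSc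
  calc m / (2 * D) * conductance G ≤ m / (2 * D) * (G.cutSize S / min (G.vol S) (G.vol Sᶜ)) := by
        gcongr
        exact conductance_le_cutSize_div G hS hSc
    _ = m * G.cutSize S / (2 * D ^ 2) / (min (G.vol S) (G.vol Sᶜ) * D / D ^ 2) := by
        field_simp
    _ ≤ N / (G.vol S * G.vol Sᶜ / D ^ 2) := by
        gcongr
    _ = N / Vpi (fun v => G.degree v / D) x := by rw [hV]

lemma conductance_nonneg {n : ℕ} (G : SimpleGraph (Fin n)) [DecidableRel G.Adj] :
    0 ≤ conductance G :=
  Real.iInf_nonneg fun S => div_nonneg (G.cutSize_nonneg S.1)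
    (le_min (sum_nonneg fun _ _ => Nat.cast_nonneg _) (sum_nonneg fun _ _ => Nat.cast_nonneg _))

theorem phiA_conductance_bound_general {n : ℕ}
    (G : SimpleGraph (Fin n)) [DecidableRel G.Adj] (hG : G.Connected)
    (A : Matrix (Fin n) (Fin n) ℝ)
    (hA : ∀ u v, A u v
      = (if u = v then (1 : ℝ) / 2 else 0)
        + (if G.Adj u v then 1 / (2 * (G.degree u : ℝ)) else 0)) :
    1 / PhiA A (fun v => (G.degree v : ℝ) / ∑ w, (G.degree w : ℝ))
      ≤ 2 * ((∑ v, (G.degree v : ℝ)) / ⨅ v, (G.degree v : ℝ))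
          * (1 / conductance G) := by
  obtain rfl : A = G.lazyWalk := Matrix.ext hA
  rcases isEmpty_or_nonempty {x : Fin n → Bool // ¬ IsCons x} with hcons | hcons
  -- With at most one vertex `PhiA` is an empty infimum, which is `0` in `ℝ`.
  · rw [PhiA, Real.iInf_of_isEmpty, div_zero]
    have hdmin : 0 ≤ ⨅ v, (G.degree v : ℝ) := Real.iInf_nonneg fun v => Nat.cast_nonneg _
    have := conductance_nonneg G
    positivity
  obtain ⟨⟨u, hu⟩, ⟨v, hv⟩⟩ := not_isCons_iff.1 hcons.some.2
  have : Nontrivial (Fin n) := nontrivial_of_ne u v (ne_of_mem_of_not_mem hu (mem_compl.1 hv))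
  have hdeg (v : Fin n) : 0 < G.degree v := hG.preconnected.degree_pos_of_nontrivial v
  set dmin := ⨅ v, (G.degree v : ℝ)
  have hdmin : 0 < dmin := (Nat.cast_pos.2 hG.preconnected.minDegree_pos_of_nontrivial).trans_le
    (le_ciInf fun v => Nat.cast_le.2 (G.minDegree_le_degree v))
  have hD : 0 < G.vol univ := vol_pos hdeg univ_nonempty
  have hΦ := hG.conductance_pos
  have hle : dmin / (2 * G.vol univ) * conductance G ≤
      PhiA G.lazyWalk (fun v => (G.degree v : ℝ) / ∑ w, (G.degree w : ℝ)) :=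
    le_ciInf fun x => mul_conductance_le_lazyWalk_ratio hdeg hdmin.le
      (fun v => ciInf_le (Set.finite_range _).bddBelow v) x.2
  calc _ ≤ 1 / (dmin / (2 * G.vol univ) * conductance G) :=
        one_div_le_one_div_of_le (by positivity) hle
    _ = _ := by
        field_simp
        rfl

/-- For the lazy voter interaction matrix
`a_{u,v} = (1/2)·1{u=v} + (1/(2dᵤ))·1{(u,v)∈E}` on a connected graph `G`,
`1/Φ_A ≤ 2 (d(V)/d_min) (1/Φ(G))`, where `π_v = d_v/d(V)` is the stationary
distribution. -/
theorem phiA_conductance_bound {n : ℕ} (hn : 2 ≤ n)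
    (G : SimpleGraph (Fin n)) [DecidableRel G.Adj] (hG : G.Connected)
    (A : Matrix (Fin n) (Fin n) ℝ)
    (hA : ∀ u v, A u v
      = (if u = v then (1 : ℝ) / 2 else 0)
        + (if G.Adj u v then 1 / (2 * (G.degree u : ℝ)) else 0)) :
    1 / PhiA A (fun v => (G.degree v : ℝ) / ∑ w, (G.degree w : ℝ))
      ≤ 2 * ((∑ v, (G.degree v : ℝ)) / ⨅ v, (G.degree v : ℝ))
          * (1 / conductance G) :=
  phiA_conductance_bound_general G hG A hA
end
end
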